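/- Let b₁ > b₂ > 0 and μ ≥ 3. If b₁ - b₂ < c ≤ b₁ + ((μ-2)/2)·b₂, then among all graphs on μ nodes, the star graph maximizes the social welfare W(g) = Σ_j [ d_j(b₁ - c) + Σ_{w : dist(j,w) > 1} b_{dist(j,w)} ], where b_i = b₂ for all distances i ≥ 2. -/

import Mathlib

/-- Social welfare of a graph. -/
noncomputable def socialWelfare {n : ℕ} (b : ℕ → ℝ) (c : ℝ)
    (G : SimpleGraph (Fin n)) : ℝ := by
  classical
  exact ∑ j, ((G.degree j : ℝ) * (b 1 - c) +
    ∑ w, if 1 < G.dist j w then b (G.dist j w) else 0)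

/-- The star graph with center `v`. -/
def starWith {V : Type*} [DecidableEq V] (v : V) : SimpleGraph V where
  Adj x y := x ≠ y ∧ (x = v ∨ y = v)
  symm := ⟨fun x y ⟨hxy, h⟩ => ⟨hxy.symm, h.symm⟩⟩
  loopless := ⟨fun x ⟨hxx, _⟩ => hxx rfl⟩

/-!
Write `m` for the number of edges of `G` and `P` for the number of ordered pairs at distance at
least two, so that `W(G) = 2m(b₁ - c) + P b₂`. A vertex `w` far from `j` determines the first edge
of a shortest path from `w` to `j`, an edge not incident to `j`; the far vertices, the neighbours
of `j` and `j` itself are pairwise disjoint. Summing over `j` gives `P ≤ (μ - 2) m` and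
`P ≤ μ(μ - 1) - 2m`, and the star attains both with `m = μ - 1`. For `m ≤ μ - 1` the first bound
gives `W ≤ m (2(b₁ - c) + (μ - 2) b₂)`, nondecreasing in `m` as `c ≤ b₁ + (μ - 2) b₂ / 2`; for
`m ≥ μ - 1` the second gives `W ≤ 2m(b₁ - b₂ - c) + μ(μ - 1) b₂`, nonincreasing in `m` as
`b₁ - b₂ < c`.
-/

open Finset

namespace SimpleGraph

variable {V : Type*} (G : SimpleGraph V)

lemma exists_adj_dist_eq_add_one {u v : V} (h : G.dist u v ≠ 0) :
    ∃ x, G.Adj u x ∧ G.dist u v = G.dist x v + 1 := by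
  obtain ⟨p, hp⟩ := exists_walk_of_dist_ne_zero h
  cases p with
  | nil => simp at h
  | cons hadj q =>
    refine ⟨_, hadj, le_antisymm ?_ ?_⟩
    · have := hadj.reachable.dist_triangle_left v
      rw [dist_eq_one_iff_adj.mpr hadj] at this
      omega
    · have := dist_le q
      rw [Walk.length_cons] at hp
      omega

lemma one_lt_dist_iff {u v : V} :
    1 < G.dist u v ↔ G.Reachable u v ∧ u ≠ v ∧ ¬G.Adj u v := by
  refine ⟨fun h => ⟨Reachable.of_dist_ne_zero (by omega), ?_, ?_⟩,
    fun ⟨hr, hne, hnadj⟩ => hr.one_lt_dist_of_ne_of_not_adj hne hnadj⟩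
  · rintro rfl
    simp at h
  · intro hadj
    rw [dist_eq_one_iff_adj.mpr hadj] at h
    exact h.false

variable [Fintype V]

noncomputable def farFinset (j : V) : Finset V := {w | 1 < G.dist j w}

@[simp]
lemma mem_farFinset {j w : V} : w ∈ G.farFinset j ↔ 1 < G.dist j w := by
  simp [farFinset]

variable [DecidableEq V] [DecidableRel G.Adj]

lemma card_farFinset_add_degree_le (j : V) :
    #(G.farFinset j) + G.degree j ≤ #G.edgeFinset := by
  have hstep : ∀ w ∈ G.farFinset j, ∃ x, G.Adj w x ∧ G.dist w j = G.dist x j + 1 :=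
    fun w hw => G.exists_adj_dist_eq_add_one (by rw [mem_farFinset, dist_comm] at hw; omega)
  choose! next hadj hdist using hstep
  -- `w` is recovered from the edge `s(w, next w)` as its endpoint farther from `j`.
  have hfar : #(G.farFinset j) ≤ #{e ∈ G.edgeFinset | j ∉ e} := by
    refine card_le_card_of_injOn (fun w => s(w, next w)) (fun w hw => ?_)
      (fun w hw w' hw' heq => ?_)
    · have hd := hdist w hw
      have ha := hadj w hw
      rw [mem_coe, mem_farFinset, dist_comm] at hw
      simp only [coe_filter, Set.mem_ofPred_eq, mem_edgeFinset, mem_edgeSet, Sym2.mem_iff,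
        not_or]
      refine ⟨ha, ?_, fun h => ?_⟩
      · rintro rfl
        simp at hw
      · rw [← h, dist_self] at hd
        omega
    · have hd := hdist w hw
      have hd' := hdist w' hw'
      rcases Sym2.eq_iff.mp heq with ⟨h, -⟩ | ⟨h₁, h₂⟩
      · exact h
      · rw [h₂] at hd
        rw [← h₁] at hd'
        omega
  rw [← card_incidenceFinset_eq_degree, incidenceFinset_eq_filter,
    ← card_filter_add_card_filter_not (fun e => j ∈ e) (s := G.edgeFinset)]
  omega

lemma card_farFinset_add_degree_lt_card (j : V) :
    #(G.farFinset j) + G.degree j < Fintype.card V := by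
  have hdisj : Disjoint (G.farFinset j) (G.neighborFinset j) := by
    refine Finset.disjoint_left.mpr fun w hw hadj => ?_
    rw [mem_farFinset, one_lt_dist_iff] at hw
    exact hw.2.2 ((mem_neighborFinset _ _ _).mp hadj)
  have hsub : G.farFinset j ∪ G.neighborFinset j ⊆ univ.erase j := by
    intro w hw
    rw [mem_erase]
    refine ⟨?_, mem_univ w⟩
    rintro rfl
    rcases mem_union.mp hw with h | h <;> simp at h
  calc #(G.farFinset j) + G.degree j = #(G.farFinset j ∪ G.neighborFinset j) := by
        rw [card_union_of_disjoint hdisj, card_neighborFinset_eq_degree]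
    _ ≤ #(univ.erase j) := card_le_card hsub
    _ < #univ := card_erase_lt_of_mem (mem_univ j)

lemma sum_card_farFinset_add_twice_card_edges_le :
    ∑ j, #(G.farFinset j) + 2 * #G.edgeFinset ≤ Fintype.card V * #G.edgeFinset := by
  have h := sum_le_sum fun j (_ : j ∈ univ) => G.card_farFinset_add_degree_le j
  rw [sum_add_distrib, sum_degrees_eq_twice_card_edges] at h
  simpa using h

lemma sum_card_farFinset_add_twice_card_edges_add_card_le :
    ∑ j, #(G.farFinset j) + 2 * #G.edgeFinset + Fintype.card V ≤
      Fintype.card V * Fintype.card V := by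
  have h := sum_le_sum fun j (_ : j ∈ univ) =>
    Nat.add_one_le_of_lt (G.card_farFinset_add_degree_lt_card j)
  rw [sum_add_distrib, sum_add_distrib, sum_degrees_eq_twice_card_edges] at h
  simpa using h

end SimpleGraph

section starWith

open SimpleGraph

variable {V : Type*} [DecidableEq V] (v : V)

@[simp]
lemma starWith_adj {x y : V} : (starWith v).Adj x y ↔ x ≠ y ∧ (x = v ∨ y = v) := Iff.rfl

lemma starWith_reachable (x y : V) : (starWith v).Reachable x y := by
  have h (x : V) : (starWith v).Reachable x v := by
    by_cases hx : x = v
    · exact hx ▸ Reachable.rfl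
    · exact Adj.reachable ⟨hx, Or.inr rfl⟩
  exact (h x).trans (h y).symm

lemma one_lt_dist_starWith_iff {x y : V} :
    1 < (starWith v).dist x y ↔ x ≠ y ∧ x ≠ v ∧ y ≠ v := by
  rw [one_lt_dist_iff]
  simp only [starWith_reachable, starWith_adj, true_and]
  tauto

lemma neighborFinset_starWith_of_ne {j : V} (hj : j ≠ v)
    [Fintype ((starWith v).neighborSet j)] :
    (starWith v).neighborFinset j = {v} := by
  ext
  simp only [mem_neighborFinset, starWith_adj, mem_singleton]
  constructor
  · rintro ⟨-, h | h⟩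
    exacts [absurd h hj, h]
  · rintro rfl
    exact ⟨hj, Or.inr rfl⟩

variable [Fintype V]

lemma neighborFinset_starWith_self [Fintype ((starWith v).neighborSet v)] :
    (starWith v).neighborFinset v = univ.erase v := by
  ext
  simp [eq_comm]

lemma cast_card_edgeFinset_starWith [DecidableRel (starWith v).Adj] :
    (#(starWith v).edgeFinset : ℝ) = Fintype.card V - 1 := by
  have h := congrArg (Nat.cast : ℕ → ℝ) (starWith v).sum_degrees_eq_twice_card_edges
  rw [← add_sum_erase _ _ (mem_univ v), ← card_neighborFinset_eq_degree,
    neighborFinset_starWith_self, sum_congr rfl fun j hj => by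
      rw [← card_neighborFinset_eq_degree, neighborFinset_starWith_of_ne v (ne_of_mem_erase hj),
        card_singleton]] at h
  simp only [sum_const, smul_eq_mul, mul_one] at h
  push_cast [cast_card_erase_of_mem (mem_univ v), card_univ] at h
  linarith

lemma farFinset_starWith_self : (starWith v).farFinset v = ∅ := by
  ext
  simp [one_lt_dist_starWith_iff]

lemma farFinset_starWith_of_ne {j : V} (hj : j ≠ v) :
    (starWith v).farFinset j = (univ.erase v).erase j := by
  ext
  simp [one_lt_dist_starWith_iff, hj]
  tauto

lemma cast_sum_card_farFinset_starWith :
    (∑ j, #((starWith v).farFinset j) : ℝ) =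
      (Fintype.card V - 1) * (Fintype.card V - 2) := by
  rw [← add_sum_erase _ _ (mem_univ v), farFinset_starWith_self, card_empty, Nat.cast_zero,
    zero_add, sum_congr rfl fun j hj => by
      rw [farFinset_starWith_of_ne v (ne_of_mem_erase hj), cast_card_erase_of_mem hj,
        cast_card_erase_of_mem (mem_univ v), card_univ],
    sum_const, nsmul_eq_mul, cast_card_erase_of_mem (mem_univ v), card_univ]
  ring

end starWith

open Classical in
lemma socialWelfare_eq {n : ℕ} (b : ℕ → ℝ) (c : ℝ) (hb : ∀ i, 2 ≤ i → b i = b 2)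
    (G : SimpleGraph (Fin n)) :
    socialWelfare b c G =
      2 * #G.edgeFinset * (b 1 - c) + (∑ j, (#(G.farFinset j) : ℝ)) * b 2 := by
  have hfar (j : Fin n) :
      (∑ w, if 1 < G.dist j w then b (G.dist j w) else 0) = #(G.farFinset j) * b 2 := by
    rw [← sum_filter, ← nsmul_eq_mul, ← sum_const]
    exact sum_congr rfl fun w hw => hb _ (G.mem_farFinset.mp hw)
  simp only [socialWelfare, sum_add_distrib, ← sum_mul, hfar]
  rw [← Nat.cast_sum, G.sum_degrees_eq_twice_card_edges]
  push_cast
  ring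

lemma welfare_le_of_card_bounds {n m P b₁ b₂ c : ℝ} (hb₂ : 0 ≤ b₂) (hc₁ : b₁ - b₂ ≤ c)
    (hc₂ : c ≤ b₁ + (n - 2) / 2 * b₂) (hP₁ : P + 2 * m ≤ n * m) (hP₂ : P + 2 * m + n ≤ n * n) :
    2 * m * (b₁ - c) + P * b₂ ≤ 2 * (n - 1) * (b₁ - c) + (n - 1) * (n - 2) * b₂ := by
  rcases le_total m (n - 1) with hm | hm
  · nlinarith [mul_le_mul_of_nonneg_right (show P ≤ (n - 2) * m by linarith) hb₂,
      mul_nonneg (sub_nonneg.mpr hm) (show 0 ≤ 2 * (b₁ - c) + (n - 2) * b₂ by linarith)]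
  · nlinarith [mul_le_mul_of_nonneg_right (show P ≤ n * n - n - 2 * m by linarith) hb₂,
      mul_nonneg (sub_nonneg.mpr hm) (show 0 ≤ b₂ - (b₁ - c) by linarith)]

theorem stmt_5_general (μ : ℕ) (b : ℕ → ℝ) (c : ℝ)
    (h2 : b 2 > 0) (hb : ∀ i, 2 ≤ i → b i = b 2)
    (hc1 : b 1 - b 2 < c) (hc2 : c ≤ b 1 + (((μ : ℝ) - 2) / 2) * b 2) :
    ∀ (v : Fin μ) (G : SimpleGraph (Fin μ)),
      socialWelfare b c G ≤ socialWelfare b c (starWith v) := by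
  classical
  intro v G
  have hP₁ := G.sum_card_farFinset_add_twice_card_edges_le
  have hP₂ := G.sum_card_farFinset_add_twice_card_edges_add_card_le
  rw [Fintype.card_fin] at hP₁ hP₂
  rw [socialWelfare_eq b c hb, socialWelfare_eq b c hb, cast_card_edgeFinset_starWith,
    cast_sum_card_farFinset_starWith, Fintype.card_fin]
  exact welfare_le_of_card_bounds h2.le hc1.le hc2 (by exact_mod_cast hP₁) (by exact_mod_cast hP₂)

theorem stmt_5 (μ : ℕ) (hμ : 3 ≤ μ) (b : ℕ → ℝ) (c : ℝ)
    (h12 : b 1 > b 2) (h2 : b 2 > 0) (hb : ∀ i, 2 ≤ i → b i = b 2)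
    (hc1 : b 1 - b 2 < c) (hc2 : c ≤ b 1 + (((μ : ℝ) - 2) / 2) * b 2) :
    ∀ (v : Fin μ) (G : SimpleGraph (Fin μ)),
      socialWelfare b c G ≤ socialWelfare b c (starWith v) :=
  stmt_5_general μ b c h2 hb hc1 hc2
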